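/- Let X = TRM(𝒜^{1:D}) ∈ ℝ^{I×K} and Y = TRM(ℬ^{1:D}) ∈ ℝ^{J×K} be two tensor-ring matrices with shared column tensorization K = ∏_d K_d, where 𝒜ᵈ ∈ ℝ^{I_d×K_d×R×R} and ℬᵈ ∈ ℝ^{J_d×K_d×S×S}. Then the product X Yᵀ is itself a tensor-ring matrix TRM(𝒞^{1:D}) of ranks RS, with core tensors given by 𝒞ᵈ[i_d, j_d, :, :] = Σ_{l=1}^{K_d} 𝒜ᵈ[i_d, l, :, :] ⊗ ℬᵈ[j_d, l, :, :]. -/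

import Mathlib

/-!
Entrywise, `(X Yᵀ)[i, j] = Σ_k tr(∏_d 𝒜ᵈ[i_d, k_d]) · tr(∏_d ℬᵈ[j_d, k_d])`. Since
`tr M · tr N = tr (M ⊗ N)` and `⊗` is multiplicative, each summand is `tr ∏_d (𝒜ᵈ ⊗ ℬᵈ)[…, k_d]`;
pulling the sum over `k` inside the trace and distributing the (noncommutative) product over
the sums `Σ_l` gives the trace of the product of the cores `𝒞ᵈ`.
-/

open Kronecker

/-- The tensor-ring matrix (TRM) with core tensors `A d : Fin (I d) → Fin (J d) → Matrix ρ ρ ℝ`. -/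
def TRM {D : ℕ} {I J : Fin D → ℕ} {ρ : Type*} [Fintype ρ] [DecidableEq ρ]
    (A : ∀ d, Fin (I d) → Fin (J d) → Matrix ρ ρ ℝ) :
    Matrix (∀ d, Fin (I d)) (∀ d, Fin (J d)) ℝ :=
  Matrix.of fun i j => (((List.finRange D).map fun d => A d (i d) (j d)).prod).trace

theorem Matrix.list_prod_map_kronecker {R m n ι : Type*} [CommSemiring R] [Fintype m] [Fintype n]
    [DecidableEq m] [DecidableEq n] (f : ι → Matrix m m R) (g : ι → Matrix n n R) :
    ∀ l : List ι, (l.map f).prod ⊗ₖ (l.map g).prod = (l.map fun d => f d ⊗ₖ g d).prod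
  | [] => by simp
  | a :: l => by
    simp only [List.map_cons, List.prod_cons, Matrix.mul_kronecker_mul,
      Matrix.list_prod_map_kronecker f g l]

theorem List.prod_map_sum_finRange {A : Type*} [Semiring A] {D : ℕ} {κ : Fin D → Type*}
    [∀ d, Fintype (κ d)] (f : ∀ d, κ d → A) :
    ((List.finRange D).map fun d => ∑ l, f d l).prod
      = ∑ k : ∀ d, κ d, ((List.finRange D).map fun d => f d (k d)).prod := by
  classical
  simpa only [MultilinearMap.mkPiAlgebraFin_apply, List.ofFn_eq_map] using
    (MultilinearMap.mkPiAlgebraFin ℕ D A).map_sum f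

/-- The product `X Yᵀ` of two tensor-ring matrices `X = TRM(𝒜)` (ranks `R`) and `Y = TRM(ℬ)`
(ranks `S`) with shared column tensorization is a tensor-ring matrix of ranks `R·S` with cores
`𝒞ᵈ[i,j,:,:] = Σ_l 𝒜ᵈ[i,l,:,:] ⊗ ℬᵈ[j,l,:,:]`. -/
theorem stmt_4 (D R S : ℕ) (I J K : Fin D → ℕ)
    (A : ∀ d, Fin (I d) → Fin (K d) → Matrix (Fin R) (Fin R) ℝ)
    (B : ∀ d, Fin (J d) → Fin (K d) → Matrix (Fin S) (Fin S) ℝ) :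
    TRM A * (TRM B).transpose
      = TRM (fun d (i : Fin (I d)) (j : Fin (J d)) =>
          ∑ l : Fin (K d), (A d i l) ⊗ₖ (B d j l)) := by
  ext i j
  simp only [TRM, Matrix.mul_apply, Matrix.transpose_apply, Matrix.of_apply,
    List.prod_map_sum_finRange, Matrix.trace_sum, ← Matrix.trace_kronecker,
    Matrix.list_prod_map_kronecker]
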